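/- arXiv:1808.03269 — 3 statements merged into one kernel-verified Lean document; each statement's English description precedes it below -/
import Mathlib

section
/- Let d ≥ 1, 0 < α < min(2,d), r > 1 and set q := (2r−1)/r. Let Ω ⊆ ℝ^d be a measurable set of finite Lebesgue measure |Ω|, let w, f, S : ℝ^d → [0,∞) be measurable functions vanishing outside Ω, and let λ₀, C_S, C_H, C₀ > 0 be constants. Set B := Γ_w[f] + ∫ S f² w² dx and assume B < ∞ as well as: (i) (Sobolev inequality) (∫ (w f)^{2r} dx)^{1/r} ≤ C_S · B; (ii) (weighted L² estimate) ∫ f² dx ≤ C_H C₀ ( Γ_w[f] + λ₀ ∫ w² f² dx ). Then (∫ f^{2q} w² dx)^{1/q} ≤ A · B, where A := (C₀ C_H + C_S)(1 + λ₀ C_S |Ω|^{1−1/r}). -/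
open MeasureTheory ENNReal

/-- The normalizing constant `A(d,α)` of the fractional Laplacian. -/
noncomputable def Ada (d : ℕ) (α : ℝ) : ℝ :=
  α * Real.Gamma (((d : ℝ) + α) / 2) /
    (2 ^ (1 - α) * Real.pi ^ ((d : ℝ) / 2) * Real.Gamma (1 - α / 2))

/-- The weighted Gagliardo form `Γ_w[f]`, with values in `[0,∞]`. -/
noncomputable def gagliardoW (d : ℕ) (α : ℝ)
    (w f : EuclideanSpace ℝ (Fin d) → ℝ) : ℝ≥0∞ :=
  ENNReal.ofReal (Ada d α / 2) *
    ∫⁻ x, ∫⁻ y, ENNReal.ofReal ((f x - f y) ^ 2 * w x * w y / ‖x - y‖ ^ ((d : ℝ) + α))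

/-!
Write `p = r/(r-1)` for the exponent conjugate to `r`. Since `f^{2q} w² = f^{2/p} (wf)²`,
Hölder's inequality gives `∫ f^{2q} w² ≤ (∫ f²)^{1/p} ‖wf‖²_{2r}`, and Hölder against `1_Ω`
gives `∫ w² f² ≤ |Ω|^{1/p} ‖wf‖²_{2r}`. The Sobolev inequality bounds `‖wf‖²_{2r}` by `C_S B`;
inserted into the weighted `L²` estimate it bounds `∫ f²` by `A B`. As `1/p + 1 = q`, taking the
`q`-th root of `(A B)^{1/p} (A B)` leaves `A B`.
-/

lemma holderConjugate_one_sub_inv_inv {r : ℝ} (hr : 1 < r) :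
    (1 - r⁻¹)⁻¹.HolderConjugate r := by
  simpa using Real.HolderConjugate.one_sub_inv_inv (inv_pos.2 (zero_lt_one.trans hr))
    (inv_lt_one_of_one_lt₀ hr)

section

variable {α : Type*} [MeasurableSpace α] {μ : Measure α}

lemma lintegral_le_measure_rpow_mul_lintegral_rpow {g : α → ℝ≥0∞} (hg : AEMeasurable g μ)
    {s : Set α} (hgs : ∀ x ∉ s, g x = 0) {r : ℝ} (hr : 1 < r) :
    ∫⁻ x, g x ∂μ ≤ μ s ^ (1 - 1 / r) * (∫⁻ x, g x ^ r ∂μ) ^ (1 / r) := by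
  have hpr := holderConjugate_one_sub_inv_inv hr
  calc ∫⁻ x, g x ∂μ = ∫⁻ x in s, 1 * g x ∂μ := by
        simp_rw [one_mul]
        exact (setLIntegral_eq_of_support_subset
          (Function.support_subset_iff'.2 hgs)).symm
  _ ≤ (∫⁻ _ in s, 1 ^ (1 - r⁻¹)⁻¹ ∂μ) ^ (1 / (1 - r⁻¹)⁻¹) *
        (∫⁻ x in s, g x ^ r ∂μ) ^ (1 / r) :=
        ENNReal.lintegral_mul_le_Lp_mul_Lq _ hpr aemeasurable_const hg.restrict
  _ ≤ μ s ^ (1 - 1 / r) * (∫⁻ x, g x ^ r ∂μ) ^ (1 / r) := by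
        simp only [one_rpow, setLIntegral_one, one_div, inv_inv]
        gcongr
        exact Measure.restrict_le_self

lemma lintegral_rpow_mul_sq_le {u v : α → ℝ≥0∞} (hu : AEMeasurable u μ)
    (hv : AEMeasurable v μ) {r : ℝ} (hr : 1 < r) :
    ∫⁻ x, u x ^ (2 * ((2 * r - 1) / r)) * v x ^ 2 ∂μ ≤
      (∫⁻ x, u x ^ 2 ∂μ) ^ (1 - 1 / r) * (∫⁻ x, (v x * u x) ^ (2 * r) ∂μ) ^ (1 / r) := by
  have hpr := holderConjugate_one_sub_inv_inv hr
  have hexp : 0 ≤ 2 - 2 / r := sub_nonneg.2 (div_le_self zero_le_two hr.le)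
  calc ∫⁻ x, u x ^ (2 * ((2 * r - 1) / r)) * v x ^ 2 ∂μ
      = ∫⁻ x, u x ^ (2 - 2 / r) * (v x * u x) ^ 2 ∂μ := by
        refine lintegral_congr fun x => ?_
        rw [show 2 * ((2 * r - 1) / r) = (2 - 2 / r) + (2 : ℕ) by field_simp; ring,
          rpow_add_of_nonneg _ _ hexp (by positivity), rpow_natCast, mul_pow]
        ring
  _ ≤ (∫⁻ x, (u x ^ (2 - 2 / r)) ^ (1 - r⁻¹)⁻¹ ∂μ) ^ (1 / (1 - r⁻¹)⁻¹) *
        (∫⁻ x, ((v x * u x) ^ 2) ^ r ∂μ) ^ (1 / r) :=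
        ENNReal.lintegral_mul_le_Lp_mul_Lq _ hpr (hu.pow_const (2 - 2 / r))
          ((hv.mul hu).pow_const 2 : AEMeasurable (fun x => (v x * u x) ^ 2) μ)
  _ = _ := by
        have h2 : (2 - 2 / r) * (1 - r⁻¹)⁻¹ = 2 := by
          have hr1 : r - 1 ≠ 0 := (sub_pos.2 hr).ne'
          field_simp
        simp_rw [← rpow_mul, h2, one_div, inv_inv, ← rpow_natCast, ← rpow_mul]
        norm_num

lemma rpow_one_div_le_of_le_rpow_mul {L X Y C : ℝ≥0∞} {a q : ℝ} (ha : 0 ≤ a) (hq : a + 1 = q)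
    (hL : L ≤ X ^ a * Y) (hX : X ≤ C) (hY : Y ≤ C) : L ^ (1 / q) ≤ C := by
  have hq0 : 0 < q := by linarith
  calc L ^ (1 / q) ≤ (X ^ a * Y) ^ (1 / q) := by gcongr
  _ ≤ (C ^ a * C ^ (1 : ℝ)) ^ (1 / q) := by rw [rpow_one]; gcongr
  _ = C := by
        rw [← rpow_add_of_nonneg _ _ ha zero_le_one, hq, ← rpow_mul,
          mul_one_div_cancel hq0.ne', rpow_one]

lemma le_ofReal_mul_of_le_ofReal_mul_add {X G W B : ℝ≥0∞} {c lam m C : ℝ} (hc : 0 ≤ c)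
    (hlam : 0 ≤ lam) (hm : 0 ≤ m) (hC : 0 ≤ C)
    (hX : X ≤ ENNReal.ofReal c * (G + ENNReal.ofReal lam * W)) (hG : G ≤ B)
    (hW : W ≤ ENNReal.ofReal m * (ENNReal.ofReal C * B)) :
    X ≤ ENNReal.ofReal (c * (1 + lam * C * m)) * B := by
  calc X ≤ ENNReal.ofReal c * (G + ENNReal.ofReal lam * W) := hX
  _ ≤ ENNReal.ofReal c *
        (B + ENNReal.ofReal lam * (ENNReal.ofReal m * (ENNReal.ofReal C * B))) := by gcongr
  _ = ENNReal.ofReal (c * (1 + lam * C * m)) * B := by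
        rw [ENNReal.ofReal_mul hc, ENNReal.ofReal_add zero_le_one (by positivity),
          ENNReal.ofReal_mul (by positivity), ENNReal.ofReal_mul hlam, ENNReal.ofReal_one]
        ring

lemma rpow_lintegral_rpow_mul_sq_le {u v : α → ℝ≥0∞} (hu : AEMeasurable u μ)
    (hv : AEMeasurable v μ) {s : Set α} (hus : ∀ x ∉ s, u x = 0) (hs : μ s < ⊤)
    {r : ℝ} (hr : 1 < r) {G B : ℝ≥0∞} {c lam C : ℝ} (hc : 0 ≤ c) (hlam : 0 ≤ lam)
    (hC : 0 ≤ C) (hG : G ≤ B)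
    (hSob : (∫⁻ x, (v x * u x) ^ (2 * r) ∂μ) ^ (1 / r) ≤ ENNReal.ofReal C * B)
    (hL2 : ∫⁻ x, u x ^ 2 ∂μ ≤
      ENNReal.ofReal c * (G + ENNReal.ofReal lam * ∫⁻ x, (v x * u x) ^ 2 ∂μ)) :
    (∫⁻ x, u x ^ (2 * ((2 * r - 1) / r)) * v x ^ 2 ∂μ) ^ (1 / ((2 * r - 1) / r)) ≤
      ENNReal.ofReal ((c + C) * (1 + lam * C * (μ s).toReal ^ (1 - 1 / r))) * B := by
  have hexp : 0 ≤ 1 - 1 / r := sub_nonneg.2 (div_le_self zero_le_one hr.le)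
  set m := (μ s).toReal ^ (1 - 1 / r) with hm_def
  have hm0 : 0 ≤ m := by positivity
  have hm : μ s ^ (1 - 1 / r) = ENNReal.ofReal m := by
    rw [hm_def, toReal_rpow, ofReal_toReal (rpow_ne_top_of_nonneg hexp hs.ne)]
  have hW : ∫⁻ x, (v x * u x) ^ 2 ∂μ ≤ ENNReal.ofReal m * (ENNReal.ofReal C * B) :=
    calc ∫⁻ x, (v x * u x) ^ 2 ∂μ
        ≤ μ s ^ (1 - 1 / r) * (∫⁻ x, ((v x * u x) ^ 2) ^ r ∂μ) ^ (1 / r) :=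
          lintegral_le_measure_rpow_mul_lintegral_rpow ((hv.mul hu).pow_const 2)
            (fun x hx => by simp [hus x hx]) hr
    _ = ENNReal.ofReal m * (∫⁻ x, (v x * u x) ^ (2 * r) ∂μ) ^ (1 / r) := by
          simp_rw [hm, ← rpow_natCast, ← rpow_mul, Nat.cast_ofNat]
    _ ≤ _ := by gcongr
  refine rpow_one_div_le_of_le_rpow_mul hexp (by field_simp; ring)
    (lintegral_rpow_mul_sq_le hu hv hr)
    ((le_ofReal_mul_of_le_ofReal_mul_add hc hlam hm0 hC hL2 hG hW).trans ?_) (hSob.trans ?_)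
  · gcongr
    linarith
  · gcongr
    nlinarith [mul_nonneg (add_nonneg hc hC) (mul_nonneg (mul_nonneg hlam hC) hm0)]

end

theorem stmt0_general (d : ℕ) (α : ℝ)
    (r : ℝ) (hr : 1 < r) (q : ℝ) (hq : q = (2 * r - 1) / r)
    (Ω : Set (EuclideanSpace ℝ (Fin d)))
    (hΩfin : volume Ω < ⊤)
    (w f S : EuclideanSpace ℝ (Fin d) → ℝ)
    (hw : Measurable w) (hf : Measurable f)
    (hw0 : ∀ x, 0 ≤ w x) (hf0 : ∀ x, 0 ≤ f x)
    (hfΩ : ∀ x ∉ Ω, f x = 0)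
    (lam0 CS CH C0 : ℝ) (hlam : 0 < lam0) (hCS : 0 < CS) (hCH : 0 < CH) (hC0 : 0 < C0)
    (B : ℝ≥0∞)
    (hB : B = gagliardoW d α w f + ∫⁻ x, ENNReal.ofReal (S x * f x ^ 2 * w x ^ 2))
    (hSob : (∫⁻ x, ENNReal.ofReal ((w x * f x) ^ (2 * r))) ^ (1 / r)
        ≤ ENNReal.ofReal CS * B)
    (hL2 : (∫⁻ x, ENNReal.ofReal (f x ^ 2))
        ≤ ENNReal.ofReal (CH * C0) *
          (gagliardoW d α w f +
            ENNReal.ofReal lam0 * ∫⁻ x, ENNReal.ofReal (w x ^ 2 * f x ^ 2))) :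
    (∫⁻ x, ENNReal.ofReal (f x ^ (2 * q) * w x ^ 2)) ^ (1 / q)
      ≤ ENNReal.ofReal
          ((C0 * CH + CS) * (1 + lam0 * CS * (volume Ω).toReal ^ (1 - 1 / r))) * B := by
  subst hq
  have hvu : ∀ x, ENNReal.ofReal (w x) * ENNReal.ofReal (f x) = ENNReal.ofReal (w x * f x) :=
    fun x => (ofReal_mul (hw0 x)).symm
  have eX : ∫⁻ x, ENNReal.ofReal (f x ^ 2) = ∫⁻ x, ENNReal.ofReal (f x) ^ 2 :=
    lintegral_congr fun x => ofReal_pow (hf0 x) 2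
  have eY : ∫⁻ x, ENNReal.ofReal ((w x * f x) ^ (2 * r)) =
      ∫⁻ x, (ENNReal.ofReal (w x) * ENNReal.ofReal (f x)) ^ (2 * r) :=
    lintegral_congr fun x => by
      rw [hvu, ofReal_rpow_of_nonneg (mul_nonneg (hw0 x) (hf0 x)) (by linarith)]
  have eW : ∫⁻ x, ENNReal.ofReal (w x ^ 2 * f x ^ 2) =
      ∫⁻ x, (ENNReal.ofReal (w x) * ENNReal.ofReal (f x)) ^ 2 :=
    lintegral_congr fun x => by rw [hvu, ← mul_pow, ofReal_pow (mul_nonneg (hw0 x) (hf0 x))]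
  have eL : ∫⁻ x, ENNReal.ofReal (f x ^ (2 * ((2 * r - 1) / r)) * w x ^ 2) =
      ∫⁻ x, ENNReal.ofReal (f x) ^ (2 * ((2 * r - 1) / r)) * ENNReal.ofReal (w x) ^ 2 :=
    lintegral_congr fun x => by
      rw [ofReal_mul (Real.rpow_nonneg (hf0 x) _),
        ofReal_rpow_of_nonneg (hf0 x)
          (mul_nonneg zero_le_two (div_nonneg (by linarith) (by linarith))), ofReal_pow (hw0 x)]
  rw [eY] at hSob
  rw [eX, eW] at hL2
  rw [eL, mul_comm C0 CH]
  exact rpow_lintegral_rpow_mul_sq_le hf.ennreal_ofReal.aemeasurable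
    hw.ennreal_ofReal.aemeasurable (fun x hx => by simp [hfΩ x hx]) hΩfin hr (by positivity)
    hlam.le hCS.le (hB ▸ le_self_add) hSob hL2

theorem stmt0 (d : ℕ) (hd : 1 ≤ d) (α : ℝ) (hα0 : 0 < α) (hα : α < min 2 (d : ℝ))
    (r : ℝ) (hr : 1 < r) (q : ℝ) (hq : q = (2 * r - 1) / r)
    (Ω : Set (EuclideanSpace ℝ (Fin d))) (hΩmeas : MeasurableSet Ω)
    (hΩfin : volume Ω < ⊤)
    (w f S : EuclideanSpace ℝ (Fin d) → ℝ)
    (hw : Measurable w) (hf : Measurable f) (hS : Measurable S)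
    (hw0 : ∀ x, 0 ≤ w x) (hf0 : ∀ x, 0 ≤ f x) (hS0 : ∀ x, 0 ≤ S x)
    (hwΩ : ∀ x ∉ Ω, w x = 0) (hfΩ : ∀ x ∉ Ω, f x = 0) (hSΩ : ∀ x ∉ Ω, S x = 0)
    (lam0 CS CH C0 : ℝ) (hlam : 0 < lam0) (hCS : 0 < CS) (hCH : 0 < CH) (hC0 : 0 < C0)
    (B : ℝ≥0∞)
    (hB : B = gagliardoW d α w f + ∫⁻ x, ENNReal.ofReal (S x * f x ^ 2 * w x ^ 2))
    (hBfin : B < ⊤)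
    (hSob : (∫⁻ x, ENNReal.ofReal ((w x * f x) ^ (2 * r))) ^ (1 / r)
        ≤ ENNReal.ofReal CS * B)
    (hL2 : (∫⁻ x, ENNReal.ofReal (f x ^ 2))
        ≤ ENNReal.ofReal (CH * C0) *
          (gagliardoW d α w f +
            ENNReal.ofReal lam0 * ∫⁻ x, ENNReal.ofReal (w x ^ 2 * f x ^ 2))) :
    (∫⁻ x, ENNReal.ofReal (f x ^ (2 * q) * w x ^ 2)) ^ (1 / q)
      ≤ ENNReal.ofReal
          ((C0 * CH + CS) * (1 + lam0 * CS * (volume Ω).toReal ^ (1 - 1 / r))) * B :=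
  stmt0_general d α r hr q hq Ω hΩfin w f S hw hf hw0 hf0 hfΩ lam0 CS CH C0 hlam hCS hCH hC0 B hB
    hSob hL2
end

section
/- Let μ be a finite measure on a measurable space X, let ρ : X → [0,∞) be measurable with ∫ ρ² dμ < ∞, and let q > 1 and M ≥ 1. Assume that for every natural number k, ( ∫ ρ^{2 q^{k+1}} dμ )^{1/q} ≤ M q^{2k} ∫ ρ^{2 q^{k}} dμ. Then the infinite product P := ∏_{k=0}^{∞} ( M q^{2k} )^{1/(2 q^{k})} is finite, and the essential supremum of ρ with respect to μ satisfies essSup_μ ρ ≤ P · ( ∫ ρ² dμ )^{1/2}. -/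
open MeasureTheory ENNReal

/-!
Write `p_k = 2 q^k` and `A_k = ∫ ρ^{p_k}`. Raising the hypothesis to the power `1 / p_k` turns it
into `A_{k+1}^{1/p_{k+1}} ≤ (M q^{2k})^{1/p_k} A_k^{1/p_k}`, so by induction every `L^{p_k}` norm of
`ρ` is bounded by a partial product of `P` times `‖ρ‖₂`. The logarithms of the factors form the
convergent series `∑ (log M + 2k log q) / (2 q^k)`, so `P` is finite, and since the factors are
`≥ 1` every partial product is at most `P`. Finally `‖ρ‖_∞ ≤ sup_k ‖ρ‖_{p_k}`: by Markov's
inequality, `t μ{ρ ≥ t}^{1/p} ≤ ‖ρ‖_p`, and `μ{ρ ≥ t}^{1/p}` tends to `1` (or is `∞`) when this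
measure is positive.
-/

open Filter Topology Finset

theorem Real.summable_log_mul_pow_rpow {M q : ℝ} (hM : 0 < M) (hq : 1 < q) :
    Summable fun k : ℕ => Real.log ((M * q ^ (2 * k)) ^ (1 / (2 * q ^ k))) := by
  have hq0 : 0 < q := one_pos.trans hq
  have hr : ‖q⁻¹‖ < 1 := by
    rw [Real.norm_of_nonneg (by positivity)]; exact inv_lt_one_of_one_lt₀ hq
  have hgeom : Summable fun k : ℕ => q⁻¹ ^ k := summable_geometric_of_norm_lt_one hr
  have harith : Summable fun k : ℕ => (k : ℝ) * q⁻¹ ^ k := by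
    simpa using summable_pow_mul_geometric_of_norm_lt_one 1 hr
  refine ((hgeom.mul_left (Real.log M / 2)).add (harith.mul_left (Real.log q))).congr fun k => ?_
  rw [Real.log_rpow (by positivity), Real.log_mul hM.ne' (by positivity), Real.log_pow, inv_pow]
  field_simp
  push_cast
  ring

theorem ENNReal.hasProd_ofReal_of_summable_log {ι : Type*} {f : ι → ℝ} (hf : ∀ i, 0 < f i)
    (hlog : Summable fun i => Real.log (f i)) :
    HasProd (fun i => ENNReal.ofReal (f i)) (ENNReal.ofReal (Real.exp (∑' i, Real.log (f i)))) :=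
  ((ENNReal.continuous_ofReal.tendsto _).comp (Real.hasProd_of_hasSum_log hf hlog.hasSum)).congr
    fun _ => ENNReal.ofReal_prod_of_nonneg fun i _ => (hf i).le

theorem ENNReal.tendsto_const_rpow_one_of_tendsto_zero {α : Type*} {l : Filter α} {c : ℝ≥0∞}
    (hc0 : c ≠ 0) (hctop : c ≠ ⊤) {g : α → ℝ} (hg : Tendsto g l (𝓝 0)) :
    Tendsto (fun i => c ^ g i) l (𝓝 1) := by
  have hc : 0 < c.toReal := ENNReal.toReal_pos hc0 hctop
  have hreal : Tendsto (fun i => c.toReal ^ g i) l (𝓝 1) := by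
    simpa [Function.comp_def] using (Real.continuousAt_const_rpow hc.ne').tendsto.comp hg
  refine (ENNReal.ofReal_one ▸ (ENNReal.continuous_ofReal.tendsto 1).comp hreal).congr fun i => ?_
  rw [Function.comp_apply, ← ENNReal.ofReal_rpow_of_pos hc, ENNReal.ofReal_toReal hctop]

theorem ENNReal.rpow_one_div_le_prod_mul_of_iterate {A c : ℕ → ℝ≥0∞} {p : ℕ → ℝ} {q : ℝ}
    (hp0 : ∀ k, 0 ≤ p k) (hp : ∀ k, p (k + 1) = q * p k)
    (hA : ∀ k, A (k + 1) ^ (1 / q) ≤ c k * A k) (k : ℕ) :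
    A k ^ (1 / p k) ≤ (∏ j ∈ range k, c j ^ (1 / p j)) * A 0 ^ (1 / p 0) := by
  induction k with
  | zero => simp
  | succ k ih =>
    have hpk : 0 ≤ 1 / p k := one_div_nonneg.2 (hp0 k)
    calc A (k + 1) ^ (1 / p (k + 1)) = (A (k + 1) ^ (1 / q)) ^ (1 / p k) := by
          rw [← ENNReal.rpow_mul, hp, one_div_mul_one_div]
      _ ≤ (c k * A k) ^ (1 / p k) := ENNReal.rpow_le_rpow (hA k) hpk
      _ = c k ^ (1 / p k) * A k ^ (1 / p k) := ENNReal.mul_rpow_of_nonneg _ _ hpk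
      _ ≤ c k ^ (1 / p k) * ((∏ j ∈ range k, c j ^ (1 / p j)) * A 0 ^ (1 / p 0)) := by
          gcongr
      _ = (∏ j ∈ range (k + 1), c j ^ (1 / p j)) * A 0 ^ (1 / p 0) := by
          rw [prod_range_succ]; ring

theorem MeasureTheory.essSup_le_of_forall_lintegral_rpow_le {X : Type*} [MeasurableSpace X]
    {μ : Measure X} {f : X → ℝ≥0∞} (hf : AEMeasurable f μ) {p : ℕ → ℝ}
    (hp : Tendsto p atTop atTop) {B : ℝ≥0∞}
    (hB : ∀ k, (∫⁻ x, f x ^ p k ∂μ) ^ (1 / p k) ≤ B) :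
    essSup f μ ≤ B := by
  by_contra! hlt
  obtain ⟨t, hBt, ht⟩ := exists_between hlt
  set E := {x | t ≤ f x}
  have hE0 : μ E ≠ 0 := by
    intro h0
    refine (essSup_le_of_ae_le t ?_).not_gt ht
    exact (measure_eq_zero_iff_ae_notMem.1 h0).mono fun x hx => le_of_lt (not_le.1 hx)
  have hmarkov : ∀ᶠ k in atTop, t * μ E ^ (1 / p k) ≤ B := by
    filter_upwards [hp.eventually_gt_atTop 0] with k hk
    have hEk : E = {x | t ^ p k ≤ f x ^ p k} := by
      ext x; exact (ENNReal.rpow_le_rpow_iff hk).symm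
    have h := mul_meas_ge_le_lintegral₀ (hf.pow_const (p k)) (t ^ p k)
    rw [← hEk] at h
    calc t * μ E ^ (1 / p k) = (t ^ p k * μ E) ^ (1 / p k) := by
          rw [ENNReal.mul_rpow_of_nonneg _ _ (by positivity), ← ENNReal.rpow_mul,
            mul_one_div_cancel hk.ne', ENNReal.rpow_one]
      _ ≤ _ := (ENNReal.rpow_le_rpow h (by positivity)).trans (hB k)
  have ht0 : t ≠ 0 := ne_bot_of_gt hBt
  by_cases hEtop : μ E = ⊤
  · obtain ⟨k, hk⟩ := (hmarkov.and (hp.eventually_gt_atTop 0)).exists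
    rw [hEtop, ENNReal.top_rpow_of_pos (by simpa using hk.2), ENNReal.mul_top ht0] at hk
    exact hBt.not_ge (le_top.trans hk.1)
  · have hexp : Tendsto (fun k => 1 / p k) atTop (𝓝 0) :=
      hp.inv_tendsto_atTop.congr fun k => (one_div (p k)).symm
    have hlim : Tendsto (fun k => t * μ E ^ (1 / p k)) atTop (𝓝 t) := by
      simpa using ENNReal.Tendsto.const_mul
        (ENNReal.tendsto_const_rpow_one_of_tendsto_zero hE0 hEtop hexp) (Or.inl one_ne_zero)
    exact hBt.not_ge (le_of_tendsto hlim hmarkov)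

theorem stmt7_general {X : Type*} [MeasurableSpace X] (mu : Measure X)
    (rho : X → ℝ) (hrhom : Measurable rho) (hrho0 : ∀ x, 0 ≤ rho x)
    (q M : ℝ) (hq : 1 < q) (hM : 1 ≤ M)
    (hiter : ∀ k : ℕ,
      (∫⁻ x, ENNReal.ofReal (rho x ^ (2 * q ^ (k + 1))) ∂mu) ^ (1 / q)
        ≤ ENNReal.ofReal (M * q ^ (2 * k)) *
            ∫⁻ x, ENNReal.ofReal (rho x ^ (2 * q ^ k)) ∂mu) :
    (∏' k : ℕ, ENNReal.ofReal ((M * q ^ (2 * k)) ^ (1 / (2 * q ^ k)))) ≠ ⊤ ∧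
    essSup (fun x => ENNReal.ofReal (rho x)) mu
      ≤ (∏' k : ℕ, ENNReal.ofReal ((M * q ^ (2 * k)) ^ (1 / (2 * q ^ k)))) *
          (∫⁻ x, ENNReal.ofReal (rho x ^ 2) ∂mu) ^ ((1 : ℝ) / 2) := by
  have hbase : ∀ k : ℕ, 1 ≤ M * q ^ (2 * k) := fun k =>
    one_le_mul_of_one_le_of_one_le hM (one_le_pow₀ hq.le)
  have hfactor : ∀ k : ℕ, 1 ≤ (M * q ^ (2 * k)) ^ (1 / (2 * q ^ k)) := fun k =>
    Real.one_le_rpow (hbase k) (by positivity)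
  have hprod := ENNReal.hasProd_ofReal_of_summable_log (fun k => one_pos.trans_le (hfactor k))
    (Real.summable_log_mul_pow_rpow (one_pos.trans_le hM) hq)
  refine ⟨hprod.tprod_eq ▸ ENNReal.ofReal_ne_top, ?_⟩
  have hpow : ∀ k : ℕ, ∫⁻ x, ENNReal.ofReal (rho x) ^ (2 * q ^ k) ∂mu
      = ∫⁻ x, ENNReal.ofReal (rho x ^ (2 * q ^ k)) ∂mu := fun k =>
    lintegral_congr fun x => ENNReal.ofReal_rpow_of_nonneg (hrho0 x) (by positivity)
  refine essSup_le_of_forall_lintegral_rpow_le hrhom.ennreal_ofReal.aemeasurable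
    ((tendsto_pow_atTop_atTop_of_one_lt hq).const_mul_atTop two_pos) fun k => ?_
  rw [hpow]
  refine (ENNReal.rpow_one_div_le_prod_mul_of_iterate (p := fun k => 2 * q ^ k)
    (fun k => by positivity) (fun k => by ring) hiter k).trans ?_
  gcongr
  · rw [prod_congr rfl fun j _ => ENNReal.ofReal_rpow_of_nonneg (by positivity) (by positivity)]
    exact hprod.multipliable.prod_le_tprod _ fun j _ => ENNReal.one_le_ofReal.2 (hfactor j)
  · norm_num

theorem stmt7 {X : Type*} [MeasurableSpace X] (mu : Measure X) [IsFiniteMeasure mu]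
    (rho : X → ℝ) (hrhom : Measurable rho) (hrho0 : ∀ x, 0 ≤ rho x)
    (hL2 : (∫⁻ x, ENNReal.ofReal (rho x ^ 2) ∂mu) < ⊤)
    (q M : ℝ) (hq : 1 < q) (hM : 1 ≤ M)
    (hiter : ∀ k : ℕ,
      (∫⁻ x, ENNReal.ofReal (rho x ^ (2 * q ^ (k + 1))) ∂mu) ^ (1 / q)
        ≤ ENNReal.ofReal (M * q ^ (2 * k)) *
            ∫⁻ x, ENNReal.ofReal (rho x ^ (2 * q ^ k)) ∂mu) :
    (∏' k : ℕ, ENNReal.ofReal ((M * q ^ (2 * k)) ^ (1 / (2 * q ^ k)))) ≠ ⊤ ∧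
    essSup (fun x => ENNReal.ofReal (rho x)) mu
      ≤ (∏' k : ℕ, ENNReal.ofReal ((M * q ^ (2 * k)) ^ (1 / (2 * q ^ k)))) *
          (∫⁻ x, ENNReal.ofReal (rho x ^ 2) ∂mu) ^ ((1 : ℝ) / 2) :=
  stmt7_general mu rho hrhom hrho0 q M hq hM hiter
end

section
/- For all real numbers a, b ≥ 0 and every natural number j ≥ 1, one has ( a^j − b^j )² ≤ j (a − b) ( a^{2j−1} − b^{2j−1} ). -/
open Finset

theorem sum_range_even_le_sum_range {M : Type*} [AddCommMonoid M] [PartialOrder M]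
    [IsOrderedAddMonoid M] {f : ℕ → M} (hf : ∀ i, 0 ≤ f i) (n : ℕ) :
    ∑ i ∈ range n, f (2 * i) ≤ ∑ i ∈ range (2 * n - 1), f i := by
  rw [← sum_image (g := (2 * ·)) fun x _ y _ h ↦ by simp only at h; omega]
  refine sum_le_sum_of_subset_of_nonneg (fun k hk ↦ ?_) fun i _ _ ↦ hf i
  simp only [mem_image, mem_range] at hk ⊢
  omega

/-- Cauchy–Schwarz on the `n` terms of the left sum; their squares are the even-indexed terms
of the right sum. -/
theorem sq_geom_sum₂_le {a b : ℝ} (ha : 0 ≤ a) (hb : 0 ≤ b) (n : ℕ) :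
    (∑ i ∈ range n, a ^ i * b ^ (n - 1 - i)) ^ 2 ≤
      n * ∑ i ∈ range (2 * n - 1), a ^ i * b ^ (2 * n - 1 - 1 - i) := calc
  (∑ i ∈ range n, a ^ i * b ^ (n - 1 - i)) ^ 2
      ≤ n * ∑ i ∈ range n, (a ^ i * b ^ (n - 1 - i)) ^ 2 := by
        simpa using sq_sum_le_card_mul_sum_sq (s := range n)
          (f := fun i ↦ a ^ i * b ^ (n - 1 - i))
  _ = n * ∑ i ∈ range n, a ^ (2 * i) * b ^ (2 * n - 1 - 1 - 2 * i) := by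
        congr 1
        refine sum_congr rfl fun i hi ↦ ?_
        rw [mul_pow, ← pow_mul, ← pow_mul]
        have := mem_range.mp hi
        congr 2 <;> omega
  _ ≤ n * ∑ i ∈ range (2 * n - 1), a ^ i * b ^ (2 * n - 1 - 1 - i) := by
        gcongr
        exact sum_range_even_le_sum_range (f := fun i ↦ a ^ i * b ^ (2 * n - 1 - 1 - i))
          (fun i ↦ by positivity) n

theorem stmt13_general (a b : ℝ) (ha : 0 ≤ a) (hb : 0 ≤ b) (j : ℕ) :
    (a ^ j - b ^ j) ^ 2 ≤ (j : ℝ) * (a - b) * (a ^ (2 * j - 1) - b ^ (2 * j - 1)) := by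
  rw [← geom_sum₂_mul, ← geom_sum₂_mul, mul_pow]
  calc (∑ i ∈ range j, a ^ i * b ^ (j - 1 - i)) ^ 2 * (a - b) ^ 2
      ≤ (j * ∑ i ∈ range (2 * j - 1), a ^ i * b ^ (2 * j - 1 - 1 - i)) * (a - b) ^ 2 := by
        gcongr
        exact sq_geom_sum₂_le ha hb j
    _ = _ := by ring

theorem stmt13 (a b : ℝ) (ha : 0 ≤ a) (hb : 0 ≤ b) (j : ℕ) (hj : 1 ≤ j) :
    (a ^ j - b ^ j) ^ 2 ≤ (j : ℝ) * (a - b) * (a ^ (2 * j - 1) - b ^ (2 * j - 1)) :=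
  stmt13_general a b ha hb j
end
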